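/- In a non-compact Polish group G, for any countable family {C_n} of nowhere dense subsets of G there exist a countable set Q ⊆ G and a closed nowhere dense set C ⊆ G such that ∪_n C_n ⊆ Q·C. -/

import Mathlib

/-!
If `G` is not compact, there are a neighbourhood `V` of `1` and a sequence `(x k)` with
`x j ∉ x k • V` for `j ≠ k`. Otherwise `G` is totally bounded for the left uniformity, so every
ultrafilter is Cauchy for both the left and the right uniformity; in a Polish group such a filter
converges (a Baire category argument in a complete compatible metric), and `G` would be compact.

Given that sequence, cut the closure of each `C n` into countably many closed nowhere dense pieces,
each inside a translate `q • K` of a small closed neighbourhood `K` of `1`, and move the pieces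
into the pairwise far apart translates `x k • K`. The moved pieces form a locally finite family of
closed nowhere dense sets, so their union `D` is closed and nowhere dense, and each piece is a
translate of a subset of `D`.
-/

open Set Topology Pointwise Filter

theorem IsNowhereDense.smul {G α : Type*} [Group G] [TopologicalSpace α] [MulAction G α]
    [ContinuousConstSMul G α] {s : Set α} (hs : IsNowhereDense s) (a : G) :
    IsNowhereDense (a • s) := by
  rw [← image_smul]
  exact (Homeomorph.smul a).isInducing.isNowhereDense_image hs

theorem exists_pairwise_notMem_smul_of_not_finite_cover {G : Type*} [Group G] {V : Set G}
    (hV : V⁻¹ = V)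
    (h : ∀ F : Set G, F.Finite → ⋃ a ∈ F, a • V ≠ univ) :
    ∃ x : ℕ → G, Pairwise fun j k => x j ∉ x k • V := by
  obtain ⟨x, -, hx⟩ := exists_seq_of_forall_finset_exists (fun _ : G => True)
    (fun a b => b ∉ a • V) fun s _ => by
      obtain ⟨y, hy⟩ := (ne_univ_iff_exists_notMem _).1 (h s s.finite_toSet)
      exact ⟨y, trivial, fun a ha hya => hy (mem_biUnion ha hya)⟩
  refine ⟨x, fun j k hjk => ?_⟩
  rcases hjk.lt_or_gt with hlt | hlt
  · rintro ⟨v, hv, hjv⟩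
    refine hx j k hlt ⟨v⁻¹, hV ▸ inv_mem_inv.2 hv, ?_⟩
    simp only [smul_eq_mul] at hjv ⊢
    rw [← hjv, mul_inv_cancel_right]
  · exact hx k j hlt

section Construction

variable {G : Type*} [Group G] [TopologicalSpace G] [IsTopologicalGroup G]

theorem locallyFinite_of_subset_smul {ι : Type*} {g : ι → G} {V K : Set G}
    (hg : Pairwise fun i j => g i ∉ g j • V) (hK : K ∈ 𝓝 1) (hKV : K * K⁻¹ * (K * K⁻¹) ⊆ V)
    {T : ι → Set G} (hT : ∀ i, T i ⊆ g i • K) : LocallyFinite T := by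
  intro z
  -- `z • K` meets at most one `T i`.
  refine ⟨z • K, smul_mem_nhds_self.2 hK, Subsingleton.finite ?_⟩
  rintro i ⟨-, hiT, k₂, hk₂, rfl⟩ j ⟨-, hjT, k₄, hk₄, rfl⟩
  obtain ⟨k₁, hk₁, hi⟩ := hT i hiT
  obtain ⟨k₃, hk₃, hj⟩ := hT j hjT
  by_contra hij
  refine hg hij ⟨k₃ * k₄⁻¹ * (k₂ * k₁⁻¹), hKV (mul_mem_mul (mul_mem_mul hk₃ (inv_mem_inv.2 hk₄))
    (mul_mem_mul hk₂ (inv_mem_inv.2 hk₁))), ?_⟩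
  simp only [smul_eq_mul] at hi hj ⊢
  rw [eq_mul_inv_of_mul_eq hi, eq_mul_inv_of_mul_eq hj]
  group

theorem exists_isClosed_isNowhereDense_forall_subset_smul [BaireSpace G] {ι : Type*} [Countable ι]
    {g h : ι → G} {V K : Set G} (hg : Pairwise fun i j => g i ∉ g j • V) (hK : K ∈ 𝓝 1)
    (hKV : K * K⁻¹ * (K * K⁻¹) ⊆ V) {P : ι → Set G} (hPc : ∀ i, IsClosed (P i))
    (hPn : ∀ i, IsNowhereDense (P i)) (hP : ∀ i, P i ⊆ h i • K) :
    ∃ D : Set G, IsClosed D ∧ IsNowhereDense D ∧ ∀ i, P i ⊆ (h i * (g i)⁻¹) • D := by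
  set T : ι → Set G := fun i => (g i * (h i)⁻¹) • P i
  have hT : ∀ i, T i ⊆ g i • K := fun i =>
    calc T i ⊆ (g i * (h i)⁻¹) • h i • K := smul_set_mono (hP i)
      _ = g i • K := by rw [smul_smul, inv_mul_cancel_right]
  have hD : IsClosed (⋃ i, T i) :=
    (locallyFinite_of_subset_smul hg hK hKV hT).isClosed_iUnion fun i => (hPc i).smul _
  refine ⟨⋃ i, T i, hD, hD.isNowhereDense_iff.2 ?_, fun i => ?_⟩
  · refine not_nonempty_iff_eq_empty.1 fun hne => not_isMeagre_of_isOpen isOpen_interior hne ?_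
    exact (isMeagre_iUnion fun i => ((hPn i).smul _).isMeagre).mono interior_subset
  · calc P i = (h i * (g i)⁻¹) • T i := by
          simp only [T, smul_smul, mul_assoc, inv_mul_cancel_left, mul_inv_cancel, one_smul]
      _ ⊆ (h i * (g i)⁻¹) • ⋃ i, T i := smul_set_mono (subset_iUnion T i)

theorem exists_countable_isClosed_isNowhereDense_iUnion_subset_mul [PolishSpace G] {V : Set G}
    (hV : V ∈ 𝓝 1) {x : ℕ → G} (hx : Pairwise fun j k => x j ∉ x k • V) {ι : Type*} [Countable ι]
    (C : ι → Set G) (hC : ∀ n, IsNowhereDense (C n)) :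
    ∃ Q D : Set G, Q.Countable ∧ IsClosed D ∧ IsNowhereDense D ∧ (⋃ n, C n) ⊆ Q * D := by
  obtain ⟨M, hM, -, -, hMV⟩ := exists_closed_nhds_one_inv_eq_mul_subset hV
  obtain ⟨K, hK, hKc, hKinv, hKM⟩ := exists_closed_nhds_one_inv_eq_mul_subset hM
  have hKV : K * K⁻¹ * (K * K⁻¹) ⊆ V := by
    rw [hKinv]; exact (mul_subset_mul hKM hKM).trans hMV
  obtain ⟨s, hs, hsK⟩ := TopologicalSpace.countable_cover_nhds fun y : G => smul_mem_nhds_self.2 hK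
  have : Countable s := hs.to_subtype
  obtain ⟨e, he⟩ := Countable.exists_injective_nat (ι × s)
  obtain ⟨D, hDc, hDn, hPD⟩ := exists_isClosed_isNowhereDense_forall_subset_smul
    (hx.comp_of_injective he) hK hKV (h := fun p => p.2)
    (P := fun p : ι × s => closure (C p.1) ∩ (p.2 : G) • K)
    (fun p => isClosed_closure.inter (hKc.smul _))
    (fun p => (hC p.1).closure.mono inter_subset_left) fun p => inter_subset_right
  refine ⟨range fun p : ι × s => (p.2 : G) * (x (e p))⁻¹, D, countable_range _, hDc, hDn, ?_⟩
  rintro y ⟨-, ⟨n, rfl⟩, hy⟩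
  obtain ⟨q, hq, hyq⟩ := mem_iUnion₂.1 (hsK.symm ▸ mem_univ y)
  obtain ⟨d, hd, rfl⟩ := hPD (n, ⟨q, hq⟩) ⟨subset_closure hy, hyq⟩
  exact mul_mem_mul (mem_range_self _) hd

end Construction

namespace Filter

variable {G : Type*} [Group G] [TopologicalSpace G]

/- For `f.NeBot`, `IsRightCauchy f` is `Cauchy f` for `IsTopologicalGroup.toUniformSpace`. In a
Polish group neither one-sided uniformity need be complete, but filters Cauchy for both converge. -/
def IsLeftCauchy (f : Filter G) : Prop :=
  ∀ V ∈ 𝓝 (1 : G), ∃ A ∈ f, ∀ a ∈ A, ∀ b ∈ A, a⁻¹ * b ∈ V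

def IsRightCauchy (f : Filter G) : Prop :=
  ∀ V ∈ 𝓝 (1 : G), ∃ A ∈ f, ∀ a ∈ A, ∀ b ∈ A, b * a⁻¹ ∈ V

theorem IsRightCauchy.of_map_inv {f : Filter G} (h : (f.map Inv.inv).IsLeftCauchy) :
    f.IsRightCauchy := by
  intro V hV
  obtain ⟨A, hA, hAV⟩ := h V hV
  refine ⟨A⁻¹, hA, fun a ha b hb => ?_⟩
  simpa only [inv_inv] using hAV b⁻¹ hb a⁻¹ ha

end Filter

theorem Ultrafilter.isLeftCauchy_of_finite_cover {G : Type*} [Group G] [TopologicalSpace G]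
    [IsTopologicalGroup G] (hG : ∀ V ∈ 𝓝 (1 : G), ∃ F : Set G, F.Finite ∧ ⋃ a ∈ F, a • V = univ)
    (𝒰 : Ultrafilter G) : (𝒰 : Filter G).IsLeftCauchy := by
  intro V hV
  obtain ⟨W, hW, -, hWinv, hWV⟩ := exists_closed_nhds_one_inv_eq_mul_subset hV
  obtain ⟨F, hF, hFW⟩ := hG W hW
  obtain ⟨a, -, ha⟩ := (Ultrafilter.finite_biUnion_mem_iff hF).1 (hFW ▸ univ_mem)
  refine ⟨a • W, ha, ?_⟩
  rintro _ ⟨u, hu, rfl⟩ _ ⟨w, hw, rfl⟩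
  simp only [smul_eq_mul, mul_inv_rev, mul_assoc, inv_mul_cancel_left]
  exact hWV (mul_mem_mul (hWinv ▸ inv_mem_inv.2 hu) hw)

section Metric

variable {G : Type*} [Group G] [PseudoMetricSpace G] [IsTopologicalGroup G]

theorem dense_iUnion_interior_setOf_dist_mul_le [BaireSpace G] {B : ℕ → Set G}
    (hB : (𝓝 (1 : G)).HasBasis (fun _ => True) B) {δ : ℝ} (hδ : 0 < δ) :
    Dense (⋃ m, interior {z | ∀ v ∈ B m, ∀ w ∈ B m, dist (v * z) (w * z) ≤ δ}) := by
  refine dense_iUnion_interior_of_closed (fun m => ?_) (eq_univ_of_forall fun z => ?_)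
  · simp only [ofPred_forall]
    exact isClosed_iInter fun v => isClosed_iInter fun _ => isClosed_iInter fun w =>
      isClosed_iInter fun _ => isClosed_le (by fun_prop) continuous_const
  · have hz : (· * z) ⁻¹' Metric.ball z (δ / 2) ∈ 𝓝 (1 : G) :=
      (continuous_mul_const z).continuousAt.preimage_mem_nhds (by
        simpa using Metric.ball_mem_nhds z (half_pos hδ))
    obtain ⟨m, -, hm⟩ := hB.mem_iff.1 hz
    refine mem_iUnion.2 ⟨m, fun v hv w hw => ?_⟩
    have hv' : dist (v * z) z < δ / 2 := hm hv
    have hw' : dist (w * z) z < δ / 2 := hm hw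
    linarith [dist_triangle_right (v * z) (w * z) z]

theorem Filter.IsLeftCauchy.dense_interior_setOf_dist_mul_le [BaireSpace G] {f : Filter G} [f.NeBot]
    (hl : f.IsLeftCauchy) (hr : f.IsRightCauchy) {δ : ℝ} (hδ : 0 < δ) :
    Dense (interior {x | ∃ A ∈ f, ∀ a ∈ A, ∀ b ∈ A, dist (a * x) (b * x) ≤ δ}) := by
  obtain ⟨B, hB⟩ := (𝓝 (1 : G)).exists_antitone_basis
  refine dense_iff_inter_open.2 fun Ω hΩ ⟨ω, hω⟩ => ?_
  obtain ⟨W, hWo, hW1, hWΩ⟩ := exists_open_nhds_one_split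
    ((continuous_mul_const ω).continuousAt.preimage_mem_nhds (by simpa using hΩ.mem_nhds hω))
  obtain ⟨L, hL, hLW⟩ := hl W (hWo.mem_nhds hW1)
  obtain ⟨y₀, hy₀⟩ := f.nonempty_of_mem hL
  have hO : IsOpen ((fun p => y₀⁻¹ * p * ω⁻¹) ⁻¹' W) := hWo.preimage (by fun_prop)
  obtain ⟨p, hpO, hpS⟩ := Dense.inter_open_nonempty
    (dense_iUnion_interior_setOf_dist_mul_le hB.toHasBasis hδ) _ hO ⟨y₀ * ω, by simpa using hW1⟩
  obtain ⟨m, hpm⟩ := mem_iUnion.1 hpS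
  set S := {z | ∀ v ∈ B m, ∀ w ∈ B m, dist (v * z) (w * z) ≤ δ}
  obtain ⟨R, hR, hRB⟩ := hr (B m) (hB.mem m)
  obtain ⟨y, hyL, hyR⟩ := f.nonempty_of_mem (inter_mem hL hR)
  -- `y⁻¹ * p` lies in `Ω`, and on its neighbourhood `y⁻¹ • interior S` the set `R` witnesses `≤ δ`.
  refine ⟨y⁻¹ * p, ?_, interior_maximal (t := y⁻¹ • interior S) ?_ (isOpen_interior.smul _) ?_⟩
  · have := hWΩ _ (hLW y hyL y₀ hy₀) _ hpO
    simpa [mul_assoc] using this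
  · rintro _ ⟨x, hx, rfl⟩
    refine ⟨R, hR, fun a ha b hb => ?_⟩
    have := interior_subset hx (a * y⁻¹) (hRB y hyR a ha) (b * y⁻¹) (hRB y hyR b hb)
    simpa [smul_eq_mul, mul_assoc] using this
  · exact ⟨p, hpm, rfl⟩

theorem Filter.IsLeftCauchy.exists_le_nhds [CompleteSpace G] {f : Filter G} [f.NeBot]
    (hl : f.IsLeftCauchy) (hr : f.IsRightCauchy) : ∃ z, f ≤ 𝓝 z := by
  obtain ⟨x₀, hx₀⟩ := (dense_iInter_of_isOpen (fun k : ℕ => isOpen_interior)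
    fun k => hl.dense_interior_setOf_dist_mul_le hr (δ := 1 / (k + 1)) (by positivity)).nonempty
  have hcauchy : Cauchy (f.map (· * x₀)) := by
    refine Metric.cauchy_iff.2 ⟨inferInstance, fun ε hε => ?_⟩
    obtain ⟨k, hk⟩ := exists_nat_one_div_lt hε
    obtain ⟨A, hA, hAk⟩ := interior_subset (mem_iInter.1 hx₀ k)
    refine ⟨(· * x₀) '' A, image_mem_map hA, ?_⟩
    rintro _ ⟨a, ha, rfl⟩ _ ⟨b, hb, rfl⟩
    exact (hAk a ha b hb).trans_lt hk
  obtain ⟨z, hz⟩ : ∃ z, Tendsto (· * x₀) f (𝓝 z) := CompleteSpace.complete hcauchy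
  refine ⟨z * x₀⁻¹, ?_⟩
  have h := hz.mul_const x₀⁻¹
  simp only [mul_inv_cancel_right] at h
  exact h

end Metric

theorem exists_pairwise_notMem_smul_of_not_compactSpace {G : Type*} [Group G] [TopologicalSpace G]
    [IsTopologicalGroup G] [PolishSpace G] (hG : ¬CompactSpace G) :
    ∃ V ∈ 𝓝 (1 : G), ∃ x : ℕ → G, Pairwise fun j k => x j ∉ x k • V := by
  by_contra! hsep
  have hcover : ∀ V ∈ 𝓝 (1 : G), ∃ F : Set G, F.Finite ∧ ⋃ a ∈ F, a • V = univ := by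
    intro V hV
    by_contra! h
    obtain ⟨x, hx⟩ := exists_pairwise_notMem_smul_of_not_finite_cover (V := V ∩ V⁻¹)
      (by rw [inter_inv, inv_inv, inter_comm]) fun F hF hFV => h F hF <|
        eq_univ_of_univ_subset <| hFV ▸ iUnion₂_mono fun a _ => smul_set_mono inter_subset_left
    exact hsep _ (inter_mem hV (inv_mem_nhds_one G hV)) x hx
  let := TopologicalSpace.upgradeIsCompletelyMetrizable G
  refine hG ⟨isCompact_iff_ultrafilter_le_nhds.2 fun 𝒰 _ => ?_⟩
  obtain ⟨z, hz⟩ := (𝒰.isLeftCauchy_of_finite_cover hcover).exists_le_nhds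
    (.of_map_inv ((𝒰.map Inv.inv).isLeftCauchy_of_finite_cover hcover))
  exact ⟨z, mem_univ z, hz⟩

/-- in a non-compact Polish group, any countable family of nowhere dense
sets is covered by countably many translates of a single closed nowhere dense set. -/
theorem countable_nwd_covered_by_translates
    {G : Type*} [Group G] [TopologicalSpace G] [IsTopologicalGroup G] [PolishSpace G]
    (hnc : ¬ CompactSpace G)
    (C : ℕ → Set G) (hC : ∀ n, IsNowhereDense (C n)) :
    ∃ (Q D : Set G), Q.Countable ∧ IsClosed D ∧ IsNowhereDense D ∧
      (⋃ n, C n) ⊆ Q * D := by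
  obtain ⟨V, hV, x, hx⟩ := exists_pairwise_notMem_smul_of_not_compactSpace hnc
  exact exists_countable_isClosed_isNowhereDense_iUnion_subset_mul hV hx C hC
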